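/- Let ε ≤ 1/3, let G admit an (ε,η)-almost-clique decomposition V = V_sparse ∪ C_1 ∪ ... ∪ C_k, and let v ∈ C_i. Then the local sparsity of v satisfies ζ_v ≥ (1−2ε)·e(v), where e(v) = |N(v) ∩ ⋃_{j≠i} C_j| is the external degree of v. -/

import Mathlib

/-!
Every external neighbour `u` of `v` lies in some other almost-clique `C j`, where it has at least
`(1 - ε)Δ` neighbours, so it has at most `εΔ` neighbours in `C i`. Since `v` has at least
`(1 - ε)Δ` neighbours in `C i`, the vertex `u` is non-adjacent to at least `(1 - 2ε)Δ` of them.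
These non-edges lie inside `N(v)` and are distinct for distinct `u`, so `N(v)` misses at least
`(1 - 2ε)Δ · e(v)` of the at most `Δ(Δ - 1)/2` pairs it could span.
-/

open Finset

variable {V : Type*} [Fintype V] [DecidableEq V]

/-- Nodes `u, v` are `ε`-similar if `|N(u) ∩ N(v)| ≥ (1−ε)Δ`, where `Δ` is the
maximum degree of `G`. -/
abbrev SimilarNodes (G : SimpleGraph V) [DecidableRel G.Adj] (ε : ℝ) (u v : V) : Prop :=
  (1 - ε) * (G.maxDegree : ℝ) ≤ ((G.neighborFinset u ∩ G.neighborFinset v).card : ℝ)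

/-- Nodes `u, v` are `ε`-friends if they are `ε`-similar and adjacent. -/
abbrev Friends (G : SimpleGraph V) [DecidableRel G.Adj] (ε : ℝ) (u v : V) : Prop :=
  SimilarNodes G ε u v ∧ G.Adj u v

/-- A node is `ε`-dense if it has at least `(1−ε)Δ` `ε`-friends. -/
def IsDense (G : SimpleGraph V) [DecidableRel G.Adj] (ε : ℝ) (v : V) : Prop :=
  (1 - ε) * (G.maxDegree : ℝ) ≤ ((univ.filter (fun w => Friends G ε v w)).card : ℝ)

/-- An `(ε,η)`-almost-clique decomposition of `G`: a partition
`V = V_sparse ∪ C 0 ∪ ... ∪ C (k-1)` such that `V_sparse` contains no `η`-dense node,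
`(1−ε)Δ ≤ |C i| ≤ (1+ε)Δ`, and every `v ∈ C i` has at least `(1−ε)Δ` neighbors in `C i`. -/
structure IsACD (G : SimpleGraph V) [DecidableRel G.Adj] (ε η : ℝ) {k : ℕ}
    (Vsp : Finset V) (C : Fin k → Finset V) : Prop where
  cover : ∀ v : V, v ∈ Vsp ∨ ∃ i, v ∈ C i
  disjoint_sparse : ∀ i, Disjoint Vsp (C i)
  disjoint_cliques : ∀ i j, i ≠ j → Disjoint (C i) (C j)
  sparse_not_dense : ∀ v ∈ Vsp, ¬ IsDense G η v
  card_lower : ∀ i, (1 - ε) * (G.maxDegree : ℝ) ≤ ((C i).card : ℝ)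
  card_upper : ∀ i, ((C i).card : ℝ) ≤ (1 + ε) * (G.maxDegree : ℝ)
  nbr_lower : ∀ i, ∀ v ∈ C i, (1 - ε) * (G.maxDegree : ℝ) ≤ ((G.neighborFinset v ∩ C i).card : ℝ)

/-- `m(X)`: the number of edges of `G` with both endpoints in `X`
(ordered adjacent pairs, halved). -/
def edgesIn (G : SimpleGraph V) [DecidableRel G.Adj] (X : Finset V) : ℕ :=
  ((X ×ˢ X).filter (fun p : V × V => G.Adj p.1 p.2)).card / 2

/-- The local sparsity `ζ_v = (1/Δ)·(Δ(Δ−1)/2 − m(N(v)))`. -/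
noncomputable def sparsity (G : SimpleGraph V) [DecidableRel G.Adj] (v : V) : ℝ :=
  (1 / (G.maxDegree : ℝ)) *
    ((G.maxDegree : ℝ) * ((G.maxDegree : ℝ) - 1) / 2 - (edgesIn G (G.neighborFinset v) : ℝ))

namespace SimpleGraph

variable {α : Type*} (G : SimpleGraph α) [DecidableRel G.Adj]

theorem two_mul_card_interedges_le {A B X : Finset α} (hA : A ⊆ X) (hB : B ⊆ X)
    (hAB : Disjoint A B) : 2 * #(G.interedges A B) ≤ #(G.interedges X X) := by
  classical
  have hdisj : Disjoint (G.interedges A B) (G.interedges B A) :=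
    Finset.disjoint_left.2 fun _ hAB' hBA' =>
      Finset.disjoint_left.1 hAB (G.mem_interedges_iff.1 hAB').1 (G.mem_interedges_iff.1 hBA').1
  calc 2 * #(G.interedges A B) = #(G.interedges A B) + #(G.interedges B A) := by
        have : Std.Symm G.Adj := ⟨fun _ _ h => h.symm⟩
        rw [two_mul, interedges, interedges, Rel.card_interedges_comm B A]
    _ = #(G.interedges A B ∪ G.interedges B A) := (card_union_of_disjoint hdisj).symm
    _ ≤ #(G.interedges X X) :=
        card_le_card (union_subset (G.interedges_mono hA hB) (G.interedges_mono hB hA))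

variable [DecidableEq α]

theorem card_interedges_self_add_card_compl_interedges_self (X : Finset α) :
    #(G.interedges X X) + #(Gᶜ.interedges X X) = #X * (#X - 1) := by
  have hdisj : Disjoint (G.interedges X X) (Gᶜ.interedges X X) :=
    Finset.disjoint_left.2 fun _ h h' =>
      (compl_adj G _ _).1 (Gᶜ.mem_interedges_iff.1 h').2.2 |>.2 (G.mem_interedges_iff.1 h).2.2
  have hunion : G.interedges X X ∪ Gᶜ.interedges X X = X.offDiag := by
    ext ⟨a, b⟩
    simp only [mem_union, mem_interedges_iff, compl_adj, mem_offDiag]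
    by_cases hab : G.Adj a b
    · simp [hab, hab.ne]
    · simp [hab]
  rw [← card_union_of_disjoint hdisj, hunion, offDiag_card, Nat.mul_sub_one]

theorem card_compl_interedges_eq_sum {A B : Finset α} (hAB : Disjoint A B) :
    #(Gᶜ.interedges A B) = ∑ u ∈ A, #(B.filter (¬ G.Adj u ·)) := by
  rw [interedges_def, card_filter, sum_product]
  refine sum_congr rfl fun u hu => ?_
  rw [card_filter]
  refine sum_congr rfl fun w hw => ?_
  simp [compl_adj, hAB.forall_ne_finset hu hw]

theorem edgesIn_add_card_compl_interedges_le {X A B : Finset α} (hA : A ⊆ X) (hB : B ⊆ X)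
    (hAB : Disjoint A B) :
    edgesIn G X + #(Gᶜ.interedges A B) ≤ (#X).choose 2 := by
  have hsplit := G.card_interedges_self_add_card_compl_interedges_self X
  have hcompl := Gᶜ.two_mul_card_interedges_le hA hB hAB
  -- `edgesIn G X` unfolds to `#(G.interedges X X) / 2`
  have hedges : 2 * edgesIn G X ≤ #(G.interedges X X) := Nat.mul_div_le _ 2
  rw [Nat.choose_two_right]
  omega

end SimpleGraph

namespace IsACD

variable {G : SimpleGraph V} [DecidableRel G.Adj] {ε η : ℝ} {k : ℕ} {Vsp : Finset V}
  {C : Fin k → Finset V}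

theorem card_neighborFinset_inter_le (hACD : IsACD G ε η Vsp C) {i j : Fin k} (hij : i ≠ j)
    {u : V} (hu : u ∈ C j) : (#(G.neighborFinset u ∩ C i) : ℝ) ≤ ε * G.maxDegree := by
  have hdisj : Disjoint (G.neighborFinset u ∩ C i) (G.neighborFinset u ∩ C j) :=
    (hACD.disjoint_cliques i j hij).mono inter_subset_right inter_subset_right
  have hsum : #(G.neighborFinset u ∩ C i) + #(G.neighborFinset u ∩ C j) ≤ G.maxDegree :=
    calc _ = #((G.neighborFinset u ∩ C i) ∪ (G.neighborFinset u ∩ C j)) :=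
          (card_union_of_disjoint hdisj).symm
      _ ≤ #(G.neighborFinset u) := card_le_card (union_subset inter_subset_left inter_subset_left)
      _ ≤ G.maxDegree := G.degree_le_maxDegree u
  have hsum' : (#(G.neighborFinset u ∩ C i) : ℝ) + #(G.neighborFinset u ∩ C j)
      ≤ G.maxDegree := by
    exact_mod_cast hsum
  linarith [hACD.nbr_lower j u hu]

theorem le_card_filter_not_adj (hACD : IsACD G ε η Vsp C) {i j : Fin k} (hij : i ≠ j)
    {v u : V} (hv : v ∈ C i) (hu : u ∈ C j) :
    (1 - 2 * ε) * G.maxDegree ≤ #((G.neighborFinset v ∩ C i).filter (¬ G.Adj u ·)) := by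
  have hadj :
      #((G.neighborFinset v ∩ C i).filter (G.Adj u ·)) ≤ #(G.neighborFinset u ∩ C i) :=
    card_le_card fun w hw => by
      simp only [mem_filter, mem_inter, SimpleGraph.mem_neighborFinset] at hw ⊢
      exact ⟨hw.2, hw.1.2⟩
  have hsplit := card_filter_add_card_filter_not (s := G.neighborFinset v ∩ C i) (G.Adj u ·)
  have hadj' : (#((G.neighborFinset v ∩ C i).filter (G.Adj u ·)) : ℝ)
      ≤ #(G.neighborFinset u ∩ C i) := by exact_mod_cast hadj
  have hsplit' : (#((G.neighborFinset v ∩ C i).filter (G.Adj u ·)) : ℝ)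
      + #((G.neighborFinset v ∩ C i).filter (¬ G.Adj u ·)) = #(G.neighborFinset v ∩ C i) := by
    exact_mod_cast hsplit
  linarith [hACD.nbr_lower i v hv, hACD.card_neighborFinset_inter_le hij hu]

end IsACD

theorem le_sparsity_of_mul_maxDegree_le {α : Type*} [Fintype α] (G : SimpleGraph α)
    [DecidableRel G.Adj] (v : α) {x : ℝ} (hΔ : 0 < G.maxDegree)
    (h : x * G.maxDegree + edgesIn G (G.neighborFinset v) ≤ G.maxDegree.choose 2) :
    x ≤ sparsity G v := by
  have hΔ' : (0 : ℝ) < G.maxDegree := by exact_mod_cast hΔ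
  rw [Nat.cast_choose_two] at h
  rw [sparsity, one_div_mul_eq_div, le_div_iff₀ hΔ']
  linarith

theorem stmt8_general (G : SimpleGraph V) [DecidableRel G.Adj] (ε η : ℝ)
    {k : ℕ} (Vsp : Finset V) (C : Fin k → Finset V) (hACD : IsACD G ε η Vsp C)
    (i : Fin k) (v : V) (hv : v ∈ C i) :
    (1 - 2 * ε) * (((G.neighborFinset v).filter (fun w => ∃ j, j ≠ i ∧ w ∈ C j)).card : ℝ) ≤
      sparsity G v := by
  set E := (G.neighborFinset v).filter fun w => ∃ j, j ≠ i ∧ w ∈ C j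
  set B := G.neighborFinset v ∩ C i
  rcases G.maxDegree.eq_zero_or_pos with hΔ | hΔ
  · have hE : #E = 0 :=
      Nat.eq_zero_of_le_zero (hΔ ▸ (card_filter_le _ _).trans (G.degree_le_maxDegree v))
    simp [hE, sparsity, hΔ]
  have hEB : Disjoint E B := Finset.disjoint_left.2 fun u hu huB => by
    obtain ⟨-, j, hji, huj⟩ := mem_filter.1 hu
    exact Finset.disjoint_left.1 (hACD.disjoint_cliques j i hji) huj (mem_inter.1 huB).2
  have hnonadj : #E • ((1 - 2 * ε) * G.maxDegree) ≤ (#(Gᶜ.interedges E B) : ℝ) := by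
    rw [G.card_compl_interedges_eq_sum hEB, Nat.cast_sum]
    refine card_nsmul_le_sum _ _ _ fun u hu => ?_
    obtain ⟨-, j, hji, huj⟩ := mem_filter.1 hu
    exact hACD.le_card_filter_not_adj hji.symm hv huj
  have hpairs : (edgesIn G (G.neighborFinset v) : ℝ) + #(Gᶜ.interedges E B)
      ≤ G.maxDegree.choose 2 := by
    exact_mod_cast (G.edgesIn_add_card_compl_interedges_le (filter_subset _ _) inter_subset_left
      hEB).trans (Nat.choose_le_choose 2 (G.degree_le_maxDegree v))
  refine le_sparsity_of_mul_maxDegree_le G v hΔ ?_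
  rw [nsmul_eq_mul] at hnonadj
  linarith

/-- If `ε ≤ 1/3` and `v ∈ C i` in an `(ε,η)`-ACD, then
`ζ_v ≥ (1−2ε)·e(v)` where `e(v) = |N(v) ∩ ⋃_{j≠i} C j|` is the external degree of `v`. -/
theorem stmt8 (G : SimpleGraph V) [DecidableRel G.Adj] (ε η : ℝ)
    (hε0 : 0 < ε) (hε : ε ≤ 1 / 3) (hη : η ∈ Set.Ioo (0 : ℝ) 1)
    {k : ℕ} (Vsp : Finset V) (C : Fin k → Finset V) (hACD : IsACD G ε η Vsp C)
    (i : Fin k) (v : V) (hv : v ∈ C i) :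
    (1 - 2 * ε) * (((G.neighborFinset v).filter (fun w => ∃ j, j ≠ i ∧ w ∈ C j)).card : ℝ) ≤
      sparsity G v :=
  stmt8_general G ε η Vsp C hACD i v hv
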